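/- For every permutation w of the positive integers with only finitely many non-fixed points, the top pipe dream T_w = {(i,j) : 1 ≤ i ≤ code(w^{-1})_j} is a pipe dream of w. -/

import Mathlib

/-- The simple transposition corresponding to the cell `(i, j)`, namely
`s_{i+j-1}`, swapping `i+j-1` and `i+j` (as a permutation of the positive integers). -/
def cellTrans (p : ℕ+ × ℕ+) : Equiv.Perm ℕ+ :=
  Equiv.swap (p.1 + p.2 - 1) (p.1 + p.2)

/-- Key used to order cells: rows increasing, and within a row, columns decreasing. -/
def cellKey (p : ℕ+ × ℕ+) : Lex (ℕ+ × ℕ+ᵒᵈ) :=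
  toLex (p.1, OrderDual.toDual p.2)

/-- The product of the simple transpositions `s_{i+j-1}` over the cells `(i,j)` of `D`,
taken with `i` increasing and, for fixed `i`, `j` decreasing. -/
def pdWord (D : Finset (ℕ+ × ℕ+)) : Equiv.Perm ℕ+ :=
  (((D.image cellKey).sort (· ≤ ·)).map
    (fun q => cellTrans ((ofLex q).1, OrderDual.ofDual (ofLex q).2))).prod

/-- The number of inversions of a permutation of the positive integers. -/
noncomputable def invNum (w : Equiv.Perm ℕ+) : ℕ :=
  Set.ncard {p : ℕ+ × ℕ+ | p.1 < p.2 ∧ w p.2 < w p.1}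

/-- `D` is a pipe dream (RC-graph) of `w`. -/
def IsPipeDream (w : Equiv.Perm ℕ+) (D : Finset (ℕ+ × ℕ+)) : Prop :=
  D.card = invNum w ∧ pdWord D = w

/-- The number of pipe dreams of `w`. -/
noncomputable def nu (w : Equiv.Perm ℕ+) : ℕ :=
  Set.ncard {D : Finset (ℕ+ × ℕ+) | IsPipeDream w D}

/-- The number of occurrences of the pattern 132 in `w`. -/
noncomputable def p132 (w : Equiv.Perm ℕ+) : ℕ :=
  Set.ncard {t : ℕ+ × ℕ+ × ℕ+ |
    t.1 < t.2.1 ∧ t.2.1 < t.2.2 ∧ w t.1 < w t.2.2 ∧ w t.2.2 < w t.2.1}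

/-- The number of occurrences of the pattern 1432 in `w`. -/
noncomputable def p1432 (w : Equiv.Perm ℕ+) : ℕ :=
  Set.ncard {t : ℕ+ × ℕ+ × ℕ+ × ℕ+ |
    t.1 < t.2.1 ∧ t.2.1 < t.2.2.1 ∧ t.2.2.1 < t.2.2.2 ∧
    w t.1 < w t.2.2.2 ∧ w t.2.2.2 < w t.2.2.1 ∧ w t.2.2.1 < w t.2.1}

/-- `w` avoids the pattern 1432. -/
def Avoids1432 (w : Equiv.Perm ℕ+) : Prop :=
  ¬ ∃ a b c d : ℕ+, a < b ∧ b < c ∧ c < d ∧ w a < w d ∧ w d < w c ∧ w c < w b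

/-- The Rothe diagram of `w`. -/
def RD (w : Equiv.Perm ℕ+) : Set (ℕ+ × ℕ+) :=
  {p | p.2 < w p.1 ∧ p.1 < w⁻¹ p.2}

/-- The Lehmer code of `w`: `code(w)_i = #{j > i : w(j) < w(i)}`. -/
noncomputable def lehmer (w : Equiv.Perm ℕ+) (i : ℕ+) : ℕ :=
  Set.ncard {j : ℕ+ | i < j ∧ w j < w i}

/-- The bottom pipe dream `B_w = {(i,j) : 1 ≤ j ≤ code(w)_i}` (as a set of cells). -/
def bottomSet (w : Equiv.Perm ℕ+) : Set (ℕ+ × ℕ+) :=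
  {p | (p.2 : ℕ) ≤ lehmer w p.1}

/-- The top pipe dream `T_w = {(i,j) : 1 ≤ i ≤ code(w⁻¹)_j}` (as a set of cells). -/
def topSet (w : Equiv.Perm ℕ+) : Set (ℕ+ × ℕ+) :=
  {p | (p.1 : ℕ) ≤ lehmer w⁻¹ p.2}

/-- `α(S)_m`: the number of cells of `S` on the diagonal `{(i,j) : i + j - 1 = m}`. -/
noncomputable def diagCount (S : Set (ℕ+ × ℕ+)) : ℕ+ → ℕ :=
  fun m => Set.ncard {p | p ∈ S ∧ p.1 + p.2 = m + 1}

/-- Ladder move of order `k` taking `D` to `D'`: writing `i = i₀ + k + 1` (so `i₀ = i - k - 1`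
and automatically `i ≥ k + 2`), it requires `(i,j) ∈ D`, `(i,j+1) ∉ D`, `(i₀,j) ∉ D`,
`(i₀,j+1) ∉ D`, and `(i',j), (i',j+1) ∈ D` for all `i - k ≤ i' < i`; it removes `(i,j)` and
adds `(i₀, j+1)`. -/
def LadderMove (k : ℕ) (D D' : Finset (ℕ+ × ℕ+)) : Prop :=
  ∃ i₀ j : ℕ+,
    (i₀ + k.succPNat, j) ∈ D ∧
    (i₀ + k.succPNat, j + 1) ∉ D ∧
    (i₀, j) ∉ D ∧
    (i₀, j + 1) ∉ D ∧
    (∀ i' : ℕ+, i₀ < i' → i' < i₀ + k.succPNat → (i', j) ∈ D ∧ (i', j + 1) ∈ D) ∧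
    D' = insert (i₀, j + 1) (D.erase (i₀ + k.succPNat, j))

/-!
Induction on the number of cells. Put `v = w⁻¹` and let `(M, j₀)` be the last cell of `T_w` in
reading order: `M` is the maximum of `code(v)` and `j₀` the leftmost column attaining it.
Maximality forces `v i < v j₀` for `i < j₀`, hence `v j₀ = M + j₀ = m + 1`; minimality of `j₀`
forces `v⁻¹ m > j₀`. So `w' = w s_m` has one inversion fewer, and `code(w'⁻¹)` differs from
`code(v)` only by lowering the entry at `j₀` by one, i.e. `T_{w'} = T_w \ {(M, j₀)}`. Since this
cell is read last, the word of `T_w` is that of `T_{w'}` followed by `s_m`.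
-/

open Equiv

namespace PNat

lemma ncard_Iio (k : ℕ+) : (Set.Iio k).ncard = k - 1 := by
  rw [← Set.Ico_bot, Set.ncard_eq_toFinset_card', Set.toFinset_Ico, card_Ico]
  rfl

lemma swap_succ_lt_swap_succ_iff {m x y : ℕ+} (h : ¬(x = m ∧ y = m + 1))
    (h' : ¬(x = m + 1 ∧ y = m)) : swap m (m + 1) x < swap m (m + 1) y ↔ x < y := by
  simp only [swap_apply_def]
  split_ifs <;> simp only [← PNat.coe_lt_coe, ← PNat.coe_inj, PNat.add_coe, PNat.one_coe] at * <;>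
    omega

end PNat

namespace Equiv.Perm

variable (v : Perm ℕ+)

lemma lehmer_set_finite (j : ℕ+) : {i | j < i ∧ v i < v j}.Finite :=
  ((Set.finite_Iio (v j)).preimage v.injective.injOn).subset fun _ hi => hi.2

lemma lehmer_add_ncard_lt (j : ℕ+) :
    lehmer v j + {i | i < j ∧ v i < v j}.ncard = v j - 1 := by
  have hsplit : {i | v i < v j} = {i | j < i ∧ v i < v j} ∪ {i | i < j ∧ v i < v j} := by
    ext i
    rcases lt_trichotomy i j with h | rfl | h
    · simp [h, h.not_gt]
    · simp
    · simp [h, h.not_gt]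
  have hdisj : _root_.Disjoint {i | j < i ∧ v i < v j} {i | i < j ∧ v i < v j} :=
    Set.disjoint_left.2 fun _ h h' => h.1.not_gt h'.1
  rw [lehmer, ← Set.ncard_union_eq hdisj (v.lehmer_set_finite j)
    ((Set.finite_Iio j).subset fun _ hi => hi.1), ← hsplit,
    show {i | v i < v j} = v ⁻¹' Set.Iio (v j) from rfl,
    Set.ncard_preimage_of_injective_subset_range v.injective (by simp), PNat.ncard_Iio]

lemma lehmer_lt (j : ℕ+) : lehmer v j < v j := by
  have := v.lehmer_add_ncard_lt j
  have := (v j).pos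
  omega

variable {v}

lemma lehmer_lt_lehmer {p q : ℕ+} (hpq : p < q) (hv : v q < v p) : lehmer v q < lehmer v p := by
  refine Set.ncard_lt_ncard ?_ (v.lehmer_set_finite p)
  exact LE.le.ssubset_of_mem_notMem (fun i hi => ⟨hpq.trans hi.1, hi.2.trans hv⟩) ⟨hpq, hv⟩
    fun hq => hq.1.false

lemma lehmer_le_lehmer {p q : ℕ+} (hpq : p < q) (hv : v q = v p + 1) :
    lehmer v q ≤ lehmer v p := by
  refine Set.ncard_le_ncard (fun i hi => ⟨hpq.trans hi.1, ?_⟩) (v.lehmer_set_finite p)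
  exact (PNat.lt_add_one_iff.1 (hv ▸ hi.2)).lt_of_ne (v.injective.ne (hpq.trans hi.1).ne')

lemma eq_one_of_lehmer_eq_zero (h : ∀ j, lehmer v j = 0) : v = 1 := by
  have hmono : StrictMono v := fun p q hpq => by
    refine (lt_or_gt_of_ne (v.injective.ne hpq.ne)).resolve_right fun hv => ?_
    simpa [h] using lehmer_lt_lehmer hpq hv
  ext x
  simpa using DFunLike.congr_fun
    (Subsingleton.elim (hmono.orderIsoOfSurjective v v.surjective) (OrderIso.refl _)) x

section CodeMaximum

variable {j₀ : ℕ+}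

lemma apply_lt_apply_of_forall_lehmer_le (hmax : ∀ j, lehmer v j ≤ lehmer v j₀) {j : ℕ+}
    (hj : j < j₀) : v j < v j₀ :=
  (lt_or_gt_of_ne (v.injective.ne hj.ne)).resolve_right fun hv =>
    (hmax j).not_gt (lehmer_lt_lehmer hj hv)

lemma coe_apply_eq_lehmer_add (hmax : ∀ j, lehmer v j ≤ lehmer v j₀) :
    (v j₀ : ℕ) = lehmer v j₀ + j₀ := by
  have hleft : {i | i < j₀ ∧ v i < v j₀} = Set.Iio j₀ :=
    Set.ext fun i => and_iff_left_of_imp (apply_lt_apply_of_forall_lehmer_le hmax)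
  have := v.lehmer_add_ncard_lt j₀
  rw [hleft, PNat.ncard_Iio] at this
  have := (v j₀).pos
  have := j₀.pos
  omega

lemma lt_of_apply_add_one_eq (hmin : ∀ j < j₀, lehmer v j < lehmer v j₀) {a : ℕ+}
    (ha : v a + 1 = v j₀) : j₀ < a := by
  refine (lt_or_gt_of_ne fun h => ?_).resolve_left fun haj => ?_
  · subst h
    exact (PNat.lt_add_right (v a) 1).ne' ha
  · exact (hmin a haj).not_ge (lehmer_le_lehmer haj ha.symm)

end CodeMaximum

lemma set_support_inv_finite {α : Type*} {w : Perm α} (hw : {x | w x ≠ x}.Finite) :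
    {x | w⁻¹ x ≠ x}.Finite :=
  hw.subset fun _ hx h => hx (Perm.inv_eq_iff_eq.2 h.symm)

lemma set_support_mul_swap_finite {α : Type*} [DecidableEq α] {w : Perm α}
    (hw : {x | w x ≠ x}.Finite) (a b : α) :
    {x | (w * swap a b) x ≠ x}.Finite :=
  (hw.union ((Set.toFinite {a, b}).subset fun _ hx => (swap_apply_ne_self_iff.1 hx).2)).subset
    (set_support_mul_subset w (swap a b))

section BoundedSupport

variable {N : ℕ+} (hN : ∀ x, v x ≠ x → x ≤ N)
include hN

lemma apply_le_of_le {x : ℕ+} (hx : x ≤ N) : v x ≤ N := by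
  by_cases h : v x = x
  · rwa [h]
  · exact hN (v x) (v.injective.ne h)

lemma le_of_inversion {p q : ℕ+} (hpq : p < q) (hv : v q < v p) : q ≤ N := by
  by_contra hqN
  have hq : v q = q := by_contra fun h => hqN (hN q h)
  by_cases hp : v p = p
  · rw [hp, hq] at hv
    exact hpq.not_gt hv
  · exact hqN (hq ▸ hv.trans_le (apply_le_of_le hN (hN p hp))).le

lemma le_of_lehmer_ne_zero {j : ℕ+} (hj : lehmer v j ≠ 0) : j ≤ N := by
  obtain ⟨q, hjq, hv⟩ := Set.nonempty_of_ncard_ne_zero hj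
  exact hjq.le.trans (le_of_inversion hN hjq hv)

end BoundedSupport

section FiniteSupport

variable (hv : {x | v x ≠ x}.Finite)
include hv

lemma exists_bound_support : ∃ N, ∀ x, v x ≠ x → x ≤ N :=
  hv.bddAbove.imp fun _ hN _ hx => hN hx

lemma inversions_finite : {p : ℕ+ × ℕ+ | p.1 < p.2 ∧ v p.2 < v p.1}.Finite := by
  obtain ⟨N, hN⟩ := exists_bound_support hv
  refine ((Set.finite_Iic N).prod (Set.finite_Iic N)).subset fun p hp => ?_
  have hq := le_of_inversion hN hp.1 hp.2
  exact ⟨hp.1.le.trans hq, hq⟩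

end FiniteSupport

lemma invNum_inv (w : Perm ℕ+) : invNum w⁻¹ = invNum w := by
  let e : ℕ+ × ℕ+ ≃ ℕ+ × ℕ+ := (Equiv.prodComm _ _).trans (w⁻¹.prodCongr w⁻¹)
  have hpre : {p : ℕ+ × ℕ+ | p.1 < p.2 ∧ w⁻¹ p.2 < w⁻¹ p.1}
      = e ⁻¹' {p | p.1 < p.2 ∧ w p.2 < w p.1} := by
    ext p
    simp [e, and_comm]
  rw [invNum, invNum, hpre, Set.ncard_preimage_of_injective_subset_range e.injective (by simp)]

section SwapMul

variable {m j₀ a : ℕ+} (hja : j₀ < a) (ha : v a = m) (hj : v j₀ = m + 1)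
include hja ha hj

lemma swap_mul_lt_swap_mul_iff {p q : ℕ+} (hpq : p < q) :
    (swap m (m + 1) * v) q < (swap m (m + 1) * v) p ↔ v q < v p ∧ ¬(p = j₀ ∧ q = a) := by
  by_cases hpair : p = j₀ ∧ q = a
  · obtain ⟨rfl, rfl⟩ := hpair
    simp [ha, hj, (PNat.lt_add_right m 1).le]
  rw [and_iff_left hpair]
  refine PNat.swap_succ_lt_swap_succ_iff ?_ ?_
  · rintro ⟨hq, hp⟩
    exact hpair ⟨v.injective (hp.trans hj.symm), v.injective (hq.trans ha.symm)⟩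
  · rintro ⟨hq, hp⟩
    obtain rfl := v.injective (hq.trans hj.symm)
    obtain rfl := v.injective (hp.trans ha.symm)
    exact hja.not_gt hpq

lemma lehmer_swap_mul_of_ne {j : ℕ+} (hj₀ : j ≠ j₀) :
    lehmer (swap m (m + 1) * v) j = lehmer v j := by
  unfold lehmer
  congr 1
  ext i
  simp only [Set.mem_ofPred_eq, and_congr_right_iff]
  intro hji
  rw [swap_mul_lt_swap_mul_iff hja ha hj hji]
  exact and_iff_left fun h => hj₀ h.1

lemma lehmer_swap_mul_add_one : lehmer (swap m (m + 1) * v) j₀ + 1 = lehmer v j₀ := by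
  have hset : {i | j₀ < i ∧ (swap m (m + 1) * v) i < (swap m (m + 1) * v) j₀}
      = {i | j₀ < i ∧ v i < v j₀} \ {a} := by
    ext i
    simp only [Set.mem_ofPred_eq, Set.mem_sdiff, Set.mem_singleton_iff]
    constructor
    · rintro ⟨hi, hlt⟩
      have := (swap_mul_lt_swap_mul_iff hja ha hj hi).1 hlt
      exact ⟨⟨hi, this.1⟩, fun h => this.2 ⟨rfl, h⟩⟩
    · rintro ⟨⟨hi, hlt⟩, hia⟩
      exact ⟨hi, (swap_mul_lt_swap_mul_iff hja ha hj hi).2 ⟨hlt, fun h => hia h.2⟩⟩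
  have ha_mem : a ∈ {i | j₀ < i ∧ v i < v j₀} := ⟨hja, by simp [ha, hj]⟩
  rw [lehmer, lehmer, hset, Set.ncard_sdiff_singleton_add_one ha_mem (v.lehmer_set_finite j₀)]

lemma invNum_swap_mul_add_one (hv : {x | v x ≠ x}.Finite) :
    invNum (swap m (m + 1) * v) + 1 = invNum v := by
  have hset : {p : ℕ+ × ℕ+ | p.1 < p.2 ∧ (swap m (m + 1) * v) p.2 < (swap m (m + 1) * v) p.1}
      = {p | p.1 < p.2 ∧ v p.2 < v p.1} \ {(j₀, a)} := by
    ext ⟨p, q⟩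
    simp only [Set.mem_ofPred_eq, Set.mem_sdiff, Set.mem_singleton_iff, Prod.mk.injEq]
    constructor
    · rintro ⟨hpq, hlt⟩
      exact ⟨⟨hpq, ((swap_mul_lt_swap_mul_iff hja ha hj hpq).1 hlt).1⟩,
        ((swap_mul_lt_swap_mul_iff hja ha hj hpq).1 hlt).2⟩
    · rintro ⟨⟨hpq, hlt⟩, hpair⟩
      exact ⟨hpq, (swap_mul_lt_swap_mul_iff hja ha hj hpq).2 ⟨hlt, hpair⟩⟩
  have hmem : (j₀, a) ∈ {p : ℕ+ × ℕ+ | p.1 < p.2 ∧ v p.2 < v p.1} :=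
    ⟨hja, by simp [ha, hj]⟩
  rw [invNum, invNum, hset, Set.ncard_sdiff_singleton_add_one hmem (inversions_finite hv)]

end SwapMul

end Equiv.Perm

open Equiv.Perm

lemma invNum_one : invNum 1 = 0 := by
  rw [invNum, ← Set.ncard_empty (ℕ+ × ℕ+)]
  congr 1
  exact Set.eq_empty_of_forall_notMem fun p hp => lt_asymm hp.1 hp.2

lemma topSet_finite {w : Perm ℕ+} (hw : {x | w x ≠ x}.Finite) : (topSet w).Finite := by
  obtain ⟨N, hN⟩ := exists_bound_support (set_support_inv_finite hw)
  refine ((Set.finite_Iic N).prod (Set.finite_Iic N)).subset fun p (hp : (p.1 : ℕ) ≤ _) => ?_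
  have hj := le_of_lehmer_ne_zero hN (j := p.2) (by have := p.1.pos; omega)
  refine ⟨?_, hj⟩
  have hlt : p.1 < w⁻¹ p.2 := PNat.coe_lt_coe _ _ |>.1 (hp.trans_lt ((w⁻¹).lehmer_lt p.2))
  exact hlt.le.trans (apply_le_of_le hN hj)

lemma eq_one_of_topSet_eq_empty {w : Perm ℕ+} (h : topSet w = ∅) : w = 1 := by
  refine inv_eq_one.1 (eq_one_of_lehmer_eq_zero fun j => ?_)
  by_contra hj
  exact h.subset (show (1, j) ∈ topSet w from Nat.one_le_iff_ne_zero.2 hj)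

lemma Finset.sort_insert_eq_concat {α : Type*} [LinearOrder α] {s : Finset α} {a : α}
    (h : ∀ b ∈ s, b ≤ a) (ha : a ∉ s) :
    (insert a s).sort (· ≤ ·) = s.sort (· ≤ ·) ++ [a] := by
  refine List.Perm.eq_of_sortedLE (sortedLT_sort _).sortedLE ?_ ?_
  · rw [List.sortedLE_iff_pairwise, List.pairwise_append]
    exact ⟨pairwise_sort _ _, List.pairwise_singleton _ _,
      fun b hb c hc => List.mem_singleton.1 hc ▸ h b ((mem_sort _).1 hb)⟩
  · refine (List.perm_ext_iff_of_nodup (sort_nodup _ _) ?_).2 fun x => by simp [or_comm]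
    simp [List.nodup_append, sort_nodup, ha]

lemma cellKey_injective : Function.Injective cellKey := by
  rintro ⟨i, j⟩ ⟨i', j'⟩ h
  simpa [cellKey] using h

lemma cellKey_le_cellKey_iff {p q : ℕ+ × ℕ+} :
    cellKey p ≤ cellKey q ↔ p.1 < q.1 ∨ p.1 = q.1 ∧ q.2 ≤ p.2 := by
  simp [cellKey, Prod.Lex.le_iff]

lemma pdWord_empty : pdWord ∅ = 1 := by
  simp [pdWord]

lemma pdWord_eq_mul_cellTrans {D : Finset (ℕ+ × ℕ+)} {p : ℕ+ × ℕ+} (hp : p ∈ D)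
    (hmax : ∀ q ∈ D, cellKey q ≤ cellKey p) :
    pdWord D = pdWord (D.erase p) * cellTrans p := by
  conv_lhs => rw [← Finset.insert_erase hp]
  have hmax' : ∀ k ∈ (D.erase p).image cellKey, k ≤ cellKey p := fun k hk => by
    obtain ⟨q, hq, rfl⟩ := Finset.mem_image.1 hk
    exact hmax q (Finset.mem_of_mem_erase hq)
  have hnot : cellKey p ∉ (D.erase p).image cellKey := by
    simp [cellKey_injective.eq_iff]
  rw [pdWord, Finset.image_insert, Finset.sort_insert_eq_concat hmax' hnot, List.map_append,
    List.prod_append]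
  simp [pdWord, cellKey]

lemma lehmer_le_of_forall_cellKey_le {w : Perm ℕ+} {p₀ : ℕ+ × ℕ+}
    (hmax : ∀ q ∈ topSet w, cellKey q ≤ cellKey p₀) (j : ℕ+) :
    lehmer w⁻¹ j ≤ p₀.1 ∧ (j < p₀.2 → lehmer w⁻¹ j < p₀.1) := by
  rcases Nat.eq_zero_or_pos (lehmer w⁻¹ j) with h | h
  · simp [h]
  have hcell := cellKey_le_cellKey_iff.1 (hmax (⟨_, h⟩, j) (le_refl (lehmer w⁻¹ j)))
  refine ⟨?_, fun hj => ?_⟩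
  · exact (PNat.coe_le_coe _ _).2 (hcell.elim le_of_lt fun h => h.1.le)
  · exact (PNat.coe_lt_coe _ _).2 (hcell.resolve_right fun h => h.2.not_gt hj)

lemma exists_mul_cellTrans_eq {w : Perm ℕ+} (hw : {x | w x ≠ x}.Finite) {p₀ : ℕ+ × ℕ+}
    (hp₀ : p₀ ∈ topSet w) (hmax : ∀ q ∈ topSet w, cellKey q ≤ cellKey p₀) :
    ∃ w' : Perm ℕ+, {x | w' x ≠ x}.Finite ∧ invNum w' + 1 = invNum w ∧
      w' * cellTrans p₀ = w ∧ topSet w' = topSet w \ {p₀} := by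
  obtain ⟨i₀, j₀⟩ := p₀
  have hcode := lehmer_le_of_forall_cellKey_le hmax
  have hi₀ : (i₀ : ℕ) = lehmer w⁻¹ j₀ := le_antisymm hp₀ (hcode j₀).1
  have hvj₀ := coe_apply_eq_lehmer_add fun j => hi₀ ▸ (hcode j).1
  set m := i₀ + j₀ - 1
  have hm : m + 1 = i₀ + j₀ := PNat.sub_add_of_lt (one_le.trans_lt (PNat.lt_add_right i₀ j₀))
  have hj : w⁻¹ j₀ = m + 1 := by
    rw [hm, ← PNat.coe_inj, hvj₀, PNat.add_coe, hi₀]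
  have ha : w⁻¹ (w m) = m := w.symm_apply_apply m
  have hja : j₀ < w m :=
    lt_of_apply_add_one_eq (fun j hj => hi₀ ▸ (hcode j).2 hj) (ha.symm ▸ hj.symm)
  have hinv : (w * swap m (m + 1))⁻¹ = swap m (m + 1) * w⁻¹ := by
    rw [mul_inv_rev, swap_inv]
  refine ⟨w * swap m (m + 1), set_support_mul_swap_finite hw _ _, ?_, ?_, ?_⟩
  · rw [← invNum_inv, hinv, ← invNum_inv w]
    exact invNum_swap_mul_add_one hja ha hj (set_support_inv_finite hw)
  · have hcell : cellTrans (i₀, j₀) = swap m (m + 1) := by rw [hm]; rfl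
    rw [hcell, mul_assoc, swap_mul_self, mul_one]
  · ext ⟨i, j⟩
    simp only [topSet, Set.mem_ofPred_eq, Set.mem_sdiff, Set.mem_singleton_iff, Prod.mk.injEq,
      hinv]
    by_cases hjj : j = j₀
    · subst hjj
      have := lehmer_swap_mul_add_one hja ha hj
      simp only [and_true, ← PNat.coe_inj]
      omega
    · rw [lehmer_swap_mul_of_ne hja ha hj hjj]
      simp [hjj]

lemma isPipeDream_of_coe_eq_topSet (T : Finset (ℕ+ × ℕ+)) {w : Perm ℕ+}
    (hw : {x | w x ≠ x}.Finite) (hT : (T : Set (ℕ+ × ℕ+)) = topSet w) : IsPipeDream w T := by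
  induction T using Finset.strongInduction generalizing w with
  | H T ih =>
    rcases T.eq_empty_or_nonempty with rfl | hne
    · obtain rfl := eq_one_of_topSet_eq_empty (by simpa using hT.symm)
      exact ⟨by rw [Finset.card_empty, invNum_one], pdWord_empty⟩
    obtain ⟨p₀, hp₀, hmax⟩ := T.exists_max_image cellKey hne
    obtain ⟨w', hw', hinv, hmul, htop⟩ := exists_mul_cellTrans_eq hw
      (by rwa [← hT, Finset.mem_coe]) fun q hq => hmax q (by rwa [← Finset.mem_coe, hT])
    have hT' := ih (T.erase p₀) (Finset.erase_ssubset hp₀) hw'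
      (by rw [Finset.coe_erase, hT, htop])
    exact ⟨by rw [← Finset.card_erase_add_one hp₀, hT'.1, hinv],
      by rw [pdWord_eq_mul_cellTrans hp₀ hmax, hT'.2, hmul]⟩

/-- the top pipe dream `T_w` is a pipe dream of `w`. -/
theorem top_is_pipe_dream (w : Equiv.Perm ℕ+)
    (hw : {x : ℕ+ | w x ≠ x}.Finite) :
    ∃ T : Finset (ℕ+ × ℕ+), (↑T : Set (ℕ+ × ℕ+)) = topSet w ∧ IsPipeDream w T :=
  ⟨(topSet_finite hw).toFinset, by simp,
    isPipeDream_of_coe_eq_topSet _ hw (by simp)⟩
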